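/- If H is a connected graph of order at least 3, then the Cartesian product K₂ □ H is not well-dominated. -/

import Mathlib

open SimpleGraph

variable {V : Type*}

/-- Closed neighborhood of a vertex. -/
def closedNbhd (G : SimpleGraph V) (v : V) : Set V := insert v (G.neighborSet v)

/-- Closed neighborhood of a set of vertices. -/
def closedNbhdSet (G : SimpleGraph V) (A : Set V) : Set V := ⋃ a ∈ A, closedNbhd G a

/-- `D` is a dominating set of `G`. -/
def IsDomSet (G : SimpleGraph V) (D : Set V) : Prop :=
  ∀ v, ∃ u ∈ D, v ∈ closedNbhd G u

/-- `D` is a minimal dominating set of `G`. -/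
def IsMinimalDomSet (G : SimpleGraph V) (D : Set V) : Prop :=
  IsDomSet G D ∧ ∀ D' ⊆ D, IsDomSet G D' → D' = D

/-- The domination number `γ`. -/
noncomputable def domNum (G : SimpleGraph V) : ℕ :=
  sInf {n | ∃ D : Set V, IsDomSet G D ∧ D.ncard = n}

/-- The upper domination number `Γ`. -/
noncomputable def upperDomNum (G : SimpleGraph V) : ℕ :=
  sSup {n | ∃ D : Set V, IsMinimalDomSet G D ∧ D.ncard = n}

/-- A graph is well-dominated if `γ = Γ`. -/
def WellDominated (G : SimpleGraph V) : Prop := domNum G = upperDomNum G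

/-- `A` is an independent set of `G`. -/
def IsIndep (G : SimpleGraph V) (A : Set V) : Prop :=
  ∀ u ∈ A, ∀ v ∈ A, ¬ G.Adj u v

/-- `A` is a maximal independent set of `G`. -/
def IsMaxIndep (G : SimpleGraph V) (A : Set V) : Prop :=
  IsIndep G A ∧ ∀ B, IsIndep G B → A ⊆ B → B = A

/-- The independence number `α`. -/
noncomputable def indepNum (G : SimpleGraph V) : ℕ :=
  sSup {n | ∃ A : Set V, IsIndep G A ∧ A.ncard = n}

/-- The strong product of two graphs. -/
def strongProd {α β : Type*} (G : SimpleGraph α) (H : SimpleGraph β) :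
    SimpleGraph (α × β) where
  Adj x y := x ≠ y ∧ (x.1 = y.1 ∨ G.Adj x.1 y.1) ∧ (x.2 = y.2 ∨ H.Adj x.2 y.2)
  symm := by
    constructor
    rintro x y ⟨h1, h2, h3⟩
    refine ⟨h1.symm, ?_, ?_⟩
    · cases h2 with
      | inl h => exact Or.inl h.symm
      | inr h => exact Or.inr h.symm
    · cases h3 with
      | inl h => exact Or.inl h.symm
      | inr h => exact Or.inr h.symm
  loopless := by constructor; rintro x ⟨h1, _⟩; exact h1 rfl

/-- The direct (tensor) product of two graphs. -/
def tensorProd {α β : Type*} (G : SimpleGraph α) (H : SimpleGraph β) :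
    SimpleGraph (α × β) where
  Adj x y := G.Adj x.1 y.1 ∧ H.Adj x.2 y.2
  symm := ⟨fun _ _ h => ⟨h.1.symm, h.2.symm⟩⟩
  loopless := ⟨fun _ h => G.irrefl h.1⟩

/-- The corona `G ⊙ K₁`. -/
def corona {α : Type*} (G : SimpleGraph α) : SimpleGraph (α ⊕ α) :=
  SimpleGraph.fromRel (fun x y =>
    match x, y with
    | Sum.inl u, Sum.inl v => G.Adj u v
    | Sum.inl u, Sum.inr v => u = v
    | _, _ => False)

/-- The private neighborhood `pn[u,D] = N[u] - N[D - {u}]`. -/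
def privateNbhd (G : SimpleGraph V) (D : Set V) (u : V) : Set V :=
  {x | x ∈ closedNbhd G u ∧ ∀ d ∈ D, d ≠ u → x ∉ closedNbhd G d}

/-- A set `D` is open irredundant if every vertex of `D` has an external
private neighbor. -/
def IsOpenIrred (G : SimpleGraph V) (D : Set V) : Prop :=
  ∀ u ∈ D, ∃ x ∈ G.neighborSet u, ∀ d ∈ D, d ≠ u → x ∉ closedNbhd G d

/-
A connected graph `H` on at least three vertices contains a vertex `u` with two distinct
neighbours `v`, `w`. In `K₂ □ H` each layer `{i} × V(H)` is a minimal dominating set, since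
`(i, b)` is the only vertex of the layer dominating `(1 - i, b)`; so `Γ ≥ |V(H)|`. On the
other hand `(0, u)` dominates both `(0, v)` and `(0, w)`, and the layer `{1} × V(H)` with
`(1, v)`, `(1, w)` removed dominates everything else, so `γ ≤ |V(H)| - 1`.
-/

section

variable {α β : Type*}

theorem mem_closedNbhd_iff {G : SimpleGraph V} {p q : V} :
    p ∈ closedNbhd G q ↔ p = q ∨ G.Adj q p :=
  Iff.rfl

theorem domNum_le_ncard {G : SimpleGraph V} {D : Set V} (hD : IsDomSet G D) :
    domNum G ≤ D.ncard :=
  Nat.sInf_le ⟨D, hD, rfl⟩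

theorem ncard_le_upperDomNum [Finite V] {G : SimpleGraph V} {D : Set V}
    (hD : IsMinimalDomSet G D) : D.ncard ≤ upperDomNum G :=
  le_csSup ⟨Nat.card V, by rintro _ ⟨D, -, rfl⟩; exact Set.ncard_le_card D⟩ ⟨D, hD, rfl⟩

theorem adj_or_exists_adj_adj_of_isPath {G : SimpleGraph V} :
    ∀ {a b : V} (p : G.Walk a b), p.IsPath → a ≠ b →
      G.Adj a b ∨ ∃ u v w, v ≠ w ∧ G.Adj u v ∧ G.Adj u w
  | _, _, .nil, _, hab => absurd rfl hab
  | _, _, .cons h .nil, _, _ => Or.inl h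
  | _, _, .cons h (.cons h' q), hp, _ => by
      refine Or.inr ⟨_, _, _, fun he => ?_, h.symm, h'⟩
      rw [Walk.cons_isPath_iff, he, Walk.support_cons] at hp
      exact hp.2 (List.mem_cons_of_mem _ q.start_mem_support)

theorem exists_adj_adj_of_connected [Fintype V] {G : SimpleGraph V} (hG : G.Connected)
    (hV : 3 ≤ Fintype.card V) : ∃ u v w, v ≠ w ∧ G.Adj u v ∧ G.Adj u w := by
  classical
  obtain ⟨a, b, c, hab, hac, hbc⟩ : ∃ a b c : V, a ≠ b ∧ a ≠ c ∧ b ≠ c := by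
    obtain ⟨s, -, hs⟩ := Finset.exists_subset_card_eq (s := Finset.univ) (n := 3) (by simpa)
    obtain ⟨a, b, c, hab, hac, hbc, -⟩ := Finset.card_eq_three.mp hs
    exact ⟨a, b, c, hab, hac, hbc⟩
  have pab := (hG.preconnected a b).some.toPath
  have pac := (hG.preconnected a c).some.toPath
  rcases adj_or_exists_adj_adj_of_isPath pab.1 pab.2 hab with hb | h
  · rcases adj_or_exists_adj_adj_of_isPath pac.1 pac.2 hac with hc | h
    · exact ⟨a, b, c, hbc, hb, hc⟩
    · exact h
  · exact h

theorem isMinimalDomSet_boxProd_top_layer [Nontrivial α] (H : SimpleGraph β) (a : α) :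
    IsMinimalDomSet ((⊤ : SimpleGraph α) □ H) (Set.range (Prod.mk a)) := by
  refine ⟨fun ⟨c, b⟩ => ⟨(a, b), ⟨b, rfl⟩, ?_⟩, fun D hD hdom => hD.antisymm ?_⟩
  · rcases eq_or_ne c a with rfl | hc
    · exact Or.inl rfl
    · exact Or.inr (boxProd_adj_left.mpr hc.symm)
  · rintro _ ⟨b, rfl⟩
    obtain ⟨c, hca⟩ := exists_ne a
    obtain ⟨_, hq, hcb⟩ := hdom (c, b)
    obtain ⟨b', rfl⟩ := hD hq
    have hb' : b' = b := by
      rcases hcb with h | ⟨-, h⟩ | ⟨-, h⟩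
      exacts [absurd (congrArg Prod.fst h) hca, h, absurd h hca.symm]
    rwa [hb'] at hq

theorem isDomSet_boxProd_top_of_adj_adj {H : SimpleGraph β} {u v w : β}
    (huv : H.Adj u v) (huw : H.Adj u w) :
    IsDomSet ((⊤ : SimpleGraph (Fin 2)) □ H) (insert (0, u) (Prod.mk 1 '' {v, w}ᶜ)) := by
  rintro ⟨i, b⟩
  by_cases hb : b ∈ ({v, w} : Set β)
  · have hub : H.Adj u b := by rcases hb with rfl | rfl <;> assumption
    have hu : u ∉ ({v, w} : Set β) := by
      rintro (rfl | rfl)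
      exacts [huv.ne rfl, huw.ne rfl]
    fin_cases i
    · exact ⟨(0, u), Set.mem_insert _ _, Or.inr (boxProd_adj_right.mpr hub)⟩
    · exact ⟨(1, u), Set.mem_insert_of_mem _ ⟨u, hu, rfl⟩, Or.inr (boxProd_adj_right.mpr hub)⟩
  · refine ⟨(1, b), Set.mem_insert_of_mem _ ⟨b, hb, rfl⟩, ?_⟩
    fin_cases i
    · exact Or.inr (boxProd_adj_left.mpr (by decide))
    · exact Or.inl rfl

theorem ncard_insert_image_compl_pair_lt [Finite β] {γ : Type*} (x : γ) (f : β → γ)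
    (hf : f.Injective) {v w : β} (hvw : v ≠ w) :
    (insert x (f '' {v, w}ᶜ)).ncard < Nat.card β := by
  have hcompl := Set.ncard_compl_add_ncard ({v, w} : Set β)
  rw [Set.ncard_pair hvw] at hcompl
  have := Set.ncard_insert_le x (f '' {v, w}ᶜ)
  rw [Set.ncard_image_of_injective _ hf] at this
  omega

end

/-- If `H` is connected of order at least `3`, then `K₂ □ H` is not well-dominated. -/
theorem stmt_17 {β : Type*} [Fintype β] (H : SimpleGraph β)
    (hH : H.Connected) (hβ : 3 ≤ Fintype.card β) :
    ¬ WellDominated ((⊤ : SimpleGraph (Fin 2)) □ H) := by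
  obtain ⟨u, v, w, hvw, huv, huw⟩ := exists_adj_adj_of_connected hH hβ
  have hγ := domNum_le_ncard (isDomSet_boxProd_top_of_adj_adj huv huw)
  have hΓ := ncard_le_upperDomNum (isMinimalDomSet_boxProd_top_layer H (0 : Fin 2))
  rw [Set.ncard_range_of_injective (Prod.mk_right_injective 0)] at hΓ
  have hlt : (insert ((0 : Fin 2), u) (Prod.mk 1 '' {v, w}ᶜ)).ncard < Nat.card β :=
    ncard_insert_image_compl_pair_lt _ _ (Prod.mk_right_injective 1) hvw
  unfold WellDominated
  omega
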